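/- arXiv:2511.10157 — 2 statements merged into one kernel-verified Lean document; each statement's English description precedes it below -/
import Mathlib

section
/- The map φ_{ij}^{(1)} : ℤ³ → ℤ³ given by (z₁, z₂, z₃) ↦ (max(z₃, z₂ - z₁), z₁ + z₃, -max(-z₁, z₃ - z₂)) is a bijection on ℤ³, with inverse given by the same formula with the roles of i and j swapped. -/
def braidMap (z : ℤ × ℤ × ℤ) : ℤ × ℤ × ℤ :=
  (max z.2.2 (z.2.1 - z.1), z.1 + z.2.2, -max (-z.1) (z.2.2 - z.2.1))

-- The formula is symmetric in `i` and `j`, so "the inverse with `i` and `j` swapped" is the map itself.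
theorem braidMap_involutive : Function.Involutive braidMap := by
  rintro ⟨z₁, z₂, z₃⟩
  simp only [braidMap, Prod.mk.injEq]
  omega

/-- The braid-type isomorphism φ_{ij}^{(1)} : ℤ³ → ℤ³ is a bijection whose
inverse is given by the same formula (with the roles of i and j swapped). -/
theorem stmt1 :
    Function.Bijective
      (fun z : ℤ × ℤ × ℤ =>
        (max z.2.2 (z.2.1 - z.1), z.1 + z.2.2, -max (-z.1) (z.2.2 - z.2.1))) ∧
    ∀ z : ℤ × ℤ × ℤ,
      (fun z : ℤ × ℤ × ℤ =>
        (max z.2.2 (z.2.1 - z.1), z.1 + z.2.2, -max (-z.1) (z.2.2 - z.2.1)))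
      ((fun z : ℤ × ℤ × ℤ =>
        (max z.2.2 (z.2.1 - z.1), z.1 + z.2.2, -max (-z.1) (z.2.2 - z.2.1))) z) = z :=
  ⟨braidMap_involutive.bijective, braidMap_involutive⟩
end

section
/- For type A_n with reduced longest word 𝐢 = (1)(21)⋯(n⋯21), let x ∈ ℤ^{n(n+1)/2} have coordinates z_{j,k} (the j-th occurrence of letter k from left to right), with the convention z_{j,0} = 0. Suppose: (a) for every i with 1 ≤ i ≤ n, max_{1 ≤ k ≤ i}(z_{n-i+2, k-1} - z_{n-i+1, k}) = 0 (interpreted as ε_i*(x) = 0, where in particular z_{n,1} = 0 for i = 1); and (b) for every i with 1 ≤ i ≤ n, Σ_{j=1}^{n-i+1} z_{j,i} = 0 (weight zero). Then z_{j,k} = 0 for all j, k. -/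
/-!
Each condition `ε_i*(x) = 0` says `z_{j+1,k} ≤ z_{j,k+1}` along the row `j = n - i + 1`.
Starting from `z_{j,0} = 0`, induction on `k` makes every coordinate nonnegative; weight zero
then says that, for each letter, a sum of nonnegative integers vanishes, so every term does.
-/

namespace CellularCrystal

theorem le_of_epsilonStar_eq_zero {n : ℕ} {z : ℕ → ℕ → ℤ}
    (ha : ∀ i, ∀ h1 : 1 ≤ i, i ≤ n →
      (Finset.Icc 1 i).sup' (Finset.nonempty_Icc.mpr h1)
        (fun k => z (n - i + 2) (k - 1) - z (n - i + 1) k) = 0)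
    {j k : ℕ} (hj : 1 ≤ j) (hjk : j + k ≤ n) :
    z (j + 1) k ≤ z j (k + 1) := by
  have hle := (Finset.Icc 1 (n - j + 1)).le_sup'
    (fun k => z (n - (n - j + 1) + 2) (k - 1) - z (n - (n - j + 1) + 1) k)
    (show k + 1 ∈ Finset.Icc 1 (n - j + 1) by rw [Finset.mem_Icc]; omega)
  rw [ha (n - j + 1) (by omega) (by omega)] at hle
  have hrow : n - (n - j + 1) + 1 = j := by omega
  have hnext : n - (n - j + 1) + 2 = j + 1 := by omega
  simp only [hrow, hnext, Nat.add_sub_cancel] at hle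
  linarith

theorem nonneg_of_epsilonStar_eq_zero {n : ℕ} {z : ℕ → ℕ → ℤ}
    (hz0 : ∀ j, z j 0 = 0)
    (ha : ∀ i, ∀ h1 : 1 ≤ i, i ≤ n →
      (Finset.Icc 1 i).sup' (Finset.nonempty_Icc.mpr h1)
        (fun k => z (n - i + 2) (k - 1) - z (n - i + 1) k) = 0)
    (k : ℕ) : ∀ j, 1 ≤ j → j + k ≤ n + 1 → 0 ≤ z j k := by
  induction k with
  | zero => exact fun j _ _ => (hz0 j).ge
  | succ k ih =>
    intro j hj hjk
    calc 0 ≤ z (j + 1) k := ih (j + 1) (by omega) (by omega)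
      _ ≤ z j (k + 1) := le_of_epsilonStar_eq_zero ha hj (by omega)

end CellularCrystal

open CellularCrystal in
theorem stmt5_general (n : ℕ) (z : ℕ → ℕ → ℤ)
    (hz0 : ∀ j, z j 0 = 0)
    (ha : ∀ i, ∀ h1 : 1 ≤ i, i ≤ n →
      (Finset.Icc 1 i).sup' (Finset.nonempty_Icc.mpr h1)
        (fun k => z (n - i + 2) (k - 1) - z (n - i + 1) k) = 0)
    (hb : ∀ i, 1 ≤ i → i ≤ n → ∑ j ∈ Finset.Icc 1 (n - i + 1), z j i = 0) :
    ∀ j k, 1 ≤ j → 1 ≤ k → j + k ≤ n + 1 → z j k = 0 := by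
  intro j k hj hk hjk
  have hterms := (Finset.sum_eq_zero_iff_of_nonneg fun j' hj' => by
    rw [Finset.mem_Icc] at hj'
    exact nonneg_of_epsilonStar_eq_zero hz0 ha k j' hj'.1 (by omega)).mp (hb k hk (by omega))
  exact hterms j (by rw [Finset.mem_Icc]; omega)

/-- Type A_n, longest word 𝐢 = (1)(21)⋯(n⋯21): if ε_i*(x) = 0 for all i and wt(x) = 0,
then all coordinates z_{j,k} vanish. -/
theorem stmt5 (n : ℕ) (hn : 1 ≤ n) (z : ℕ → ℕ → ℤ)
    (hz0 : ∀ j, z j 0 = 0)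
    (ha : ∀ i, ∀ h1 : 1 ≤ i, i ≤ n →
      (Finset.Icc 1 i).sup' (Finset.nonempty_Icc.mpr h1)
        (fun k => z (n - i + 2) (k - 1) - z (n - i + 1) k) = 0)
    (hb : ∀ i, 1 ≤ i → i ≤ n → ∑ j ∈ Finset.Icc 1 (n - i + 1), z j i = 0) :
    ∀ j k, 1 ≤ j → 1 ≤ k → j + k ≤ n + 1 → z j k = 0 :=
  stmt5_general n z hz0 ha hb
end
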